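/- arXiv:1208.5083 — 3 statements merged into one kernel-verified Lean document; each statement's English description precedes it below -/
import Mathlib

section
/- For every state s and all policies π and π' of a deterministic MDP with nonuniform discounts, (r^π)^T x^{π',s} = v^{π'}_s − v^π_s. -/
/-! Testing the flux equations of `x = x^{π',s}` against a vector `u` gives
`∑ₐ (u(src a) - γₐ u(tgt a)) xₐ = u s`, hence
`∑ₐ gainᵤ(a) xₐ = rᵀx - u s`. For `u = v^{π'}` every gain on the support of `x` vanishes,
so `rᵀx = v^{π'}_s`, and taking `u = v^π` gives the identity. -/

open Finset

/-- A deterministic Markov decision process: each action `a` is usable in the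
single state `src a`, gives reward `r a`, and moves deterministically to `tgt a`.
Every state has at least one usable action. -/
structure DetMDP (S A : Type) where
  src : A → S
  tgt : A → S
  r : A → ℝ
  exists_action : ∀ s : S, ∃ a : A, src a = s

namespace DetMDP

variable {S A : Type} [Fintype S] [Fintype A] [DecidableEq S] [DecidableEq A]
variable (M : DetMDP S A)

/-- `π : S → A` is a policy if it assigns to each state an action usable there. -/
def IsPolicy (π : S → A) : Prop := ∀ s : S, M.src (π s) = s

/-- The next-state map of a policy. -/
def step (π : S → A) (s : S) : S := M.tgt (π s)

/-- `v` is the value vector of policy `π` with nonuniform discounts `γ : A → ℝ`: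
the unique solution of `v = r_π + (G^π)ᵀ v`, stated pointwise. -/
def IsValue (γ : A → ℝ) (π : S → A) (v : S → ℝ) : Prop :=
  ∀ s : S, v s = M.r (π s) + γ (π s) * v (M.tgt (π s))

/-- The gain (reduced cost) of action `a` with respect to a value vector `v`. -/
def gain (γ : A → ℝ) (v : S → ℝ) (a : A) : ℝ :=
  M.r a + γ a * v (M.tgt a) - v (M.src a)

/-- `x` is the single-source flux vector `x^{π,s0}` of policy `π` for the source
state `s0`: it vanishes off the policy and satisfies the flux equations of the
single-source primal LP. -/
def IsFluxFrom (γ : A → ℝ) (π : S → A) (s0 : S) (x : A → ℝ) : Prop :=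
  (∀ a : A, a ≠ π (M.src a) → x a = 0) ∧
  ∀ s : S, (∑ a ∈ univ.filter fun a => M.src a = s, x a)
      = (if s = s0 then 1 else 0) +
        ∑ a ∈ univ.filter fun a => M.tgt a = s, γ a * x a

/-- `C` is (the action set of) a cycle of the policy `π`. -/
def IsCycleOf (π : S → A) (C : Finset A) : Prop :=
  ∃ s : S, (∃ k ∈ Finset.Icc 1 (Fintype.card S), (M.step π)^[k] s = s) ∧
    C = (Finset.range (Fintype.card S)).image fun i => π ((M.step π)^[i] s)

/-- One pivot of the simplex method with the highest-gain rule: switch to the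
action of (strictly positive) maximal gain. -/
def SimplexPivot (γ : A → ℝ) (π π' : S → A) : Prop :=
  ∃ (v : S → ℝ) (a : A), M.IsValue γ π v ∧ 0 < M.gain γ v a ∧
    (∀ b : A, M.gain γ v b ≤ M.gain γ v a) ∧ π' = Function.update π (M.src a) a

/-- A policy is terminal if all gains are nonpositive. -/
def IsTerminal (γ : A → ℝ) (π : S → A) : Prop :=
  ∃ v : S → ℝ, M.IsValue γ π v ∧ ∀ a : A, M.gain γ v a ≤ 0

/-- An execution of the simplex method with the highest-gain pivoting rule:
at every time step either a pivot occurs, or the current policy is terminal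
(and the sequence stays constant). -/
def IsExecution (γ : A → ℝ) (seq : ℕ → S → A) : Prop :=
  (∀ t : ℕ, M.IsPolicy (seq t)) ∧
  ∀ t : ℕ, M.SimplexPivot γ (seq t) (seq (t + 1)) ∨
    (M.IsTerminal γ (seq t) ∧ seq (t + 1) = seq t)

/-- Iteration `t` of the execution creates a new cycle. -/
def NewCycleAt (seq : ℕ → S → A) (t : ℕ) : Prop :=
  ∃ C : Finset A, M.IsCycleOf (seq (t + 1)) C ∧ ¬ M.IsCycleOf (seq t) C

/-- State `s` lies on a cycle of `π` whose discount is dominated by `γ_a`. -/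
def OnDomCycle (γ : A → ℝ) (π : S → A) (s : S) (a : A) : Prop :=
  ∃ C : Finset A, M.IsCycleOf π C ∧ π s ∈ C ∧ a ∈ C ∧ ∀ b ∈ C, γ a ≤ γ b

end DetMDP

namespace DetMDP

variable {S A : Type} [Fintype S] [Fintype A] [DecidableEq S]
  (M : DetMDP S A) (γ : A → ℝ)

lemma sum_comp_mul_eq_sum_mul_sum_fiber (g : A → S) (w : S → ℝ) (y : A → ℝ) :
    ∑ a, w (g a) * y a = ∑ s, w s * ∑ a ∈ univ.filter (fun a => g a = s), y a := by
  rw [← sum_fiberwise univ g]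
  refine sum_congr rfl fun s _ => ?_
  rw [mul_sum]
  exact sum_congr rfl fun a ha => by rw [(mem_filter.mp ha).2]

lemma sum_sub_discounted_mul_flux {π : S → A} {s0 : S} {x : A → ℝ}
    (hx : M.IsFluxFrom γ π s0 x) (w : S → ℝ) :
    ∑ a, (w (M.src a) - γ a * w (M.tgt a)) * x a = w s0 := by
  calc ∑ a, (w (M.src a) - γ a * w (M.tgt a)) * x a
      = ∑ a, w (M.src a) * x a - ∑ a, w (M.tgt a) * (γ a * x a) := by
        rw [← sum_sub_distrib]
        exact sum_congr rfl fun a _ => by ring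
    _ = ∑ s, w s * ((if s = s0 then 1 else 0)
          + ∑ a ∈ univ.filter (fun a => M.tgt a = s), γ a * x a)
        - ∑ s, w s * ∑ a ∈ univ.filter (fun a => M.tgt a = s), γ a * x a := by
        rw [sum_comp_mul_eq_sum_mul_sum_fiber M.src, sum_comp_mul_eq_sum_mul_sum_fiber M.tgt]
        simp only [hx.2]
    _ = w s0 := by
        simp only [mul_add, sum_add_distrib, mul_ite, mul_one, mul_zero, sum_ite_eq',
          mem_univ, if_true, add_sub_cancel_right]

lemma sum_gain_mul_flux {π : S → A} {s0 : S} {x : A → ℝ}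
    (hx : M.IsFluxFrom γ π s0 x) (u : S → ℝ) :
    ∑ a, M.gain γ u a * x a = ∑ a, M.r a * x a - u s0 := by
  rw [← M.sum_sub_discounted_mul_flux γ hx u, ← sum_sub_distrib]
  exact sum_congr rfl fun a _ => by unfold gain; ring

omit [Fintype S] [Fintype A] [DecidableEq S] in
lemma gain_eq_zero_of_isValue {π : S → A} {v : S → ℝ} (hv : M.IsValue γ π v) {a : A}
    (ha : a = π (M.src a)) : M.gain γ v a = 0 := by
  have hva := hv (M.src a)
  rw [← ha] at hva
  rw [gain, hva]
  ring

omit [Fintype S] in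
lemma sum_gain_mul_flux_eq_zero {π : S → A} {v : S → ℝ} {s0 : S} {x : A → ℝ}
    (hv : M.IsValue γ π v) (hx : M.IsFluxFrom γ π s0 x) :
    ∑ a, M.gain γ v a * x a = 0 := by
  refine sum_eq_zero fun a _ => ?_
  by_cases ha : a = π (M.src a)
  · rw [M.gain_eq_zero_of_isValue γ hv ha, zero_mul]
  · rw [hx.1 a ha, mul_zero]

end DetMDP

theorem single_source_gain_identity_general
    {S A : Type} [Fintype S] [Fintype A] [DecidableEq S]
    (M : DetMDP S A) (γ : A → ℝ)
    (s : S) (π' : S → A)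
    (v v' : S → ℝ) (hv' : M.IsValue γ π' v')
    (x' : A → ℝ) (hx' : M.IsFluxFrom γ π' s x') :
    ∑ a : A, M.gain γ v a * x' a = v' s - v s := by
  have hv'_pairing := M.sum_gain_mul_flux γ hx' v'
  rw [M.sum_gain_mul_flux_eq_zero γ hv' hx'] at hv'_pairing
  rw [M.sum_gain_mul_flux γ hx' v]
  linarith

/-- For every state `s` and policies `π, π'` of a deterministic
MDP with nonuniform discounts, `(r^π)ᵀ x^{π',s} = v^{π'}_s − v^π_s`. -/
theorem single_source_gain_identity
    {S A : Type} [Fintype S] [Fintype A] [DecidableEq S] [DecidableEq A]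
    (M : DetMDP S A) (γ : A → ℝ) (hγ : ∀ a : A, 0 ≤ γ a ∧ γ a < 1)
    (s : S) (π π' : S → A) (hπ : M.IsPolicy π) (hπ' : M.IsPolicy π')
    (v v' : S → ℝ) (hv : M.IsValue γ π v) (hv' : M.IsValue γ π' v')
    (x' : A → ℝ) (hx' : M.IsFluxFrom γ π' s x') :
    ∑ a : A, M.gain γ v a * x' a = v' s - v s :=
  single_source_gain_identity_general M γ s π' v v' hv' x' hx'
end

section
/- Let π be a policy of a deterministic MDP with nonuniform discounts containing a cycle C whose discount is dominated by γ_a for some action a ∈ C, let γ_C = ∏_{a'∈C} γ_{a'}, let s be a state on C, let a' = π(s) be the action used at s, and let a'' be an arbitrary action of C. Then: (i) x^{π,s}_{a'} = 1/(1−γ_C); (ii) γ_C/(1−γ_C) ≤ x^{π,s}_{a''} ≤ 1/(1−γ_C); and (iii) 1/(n(1−γ_a)) ≤ 1/(1−γ_C) ≤ 1/(1−γ_a). -/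
open Finset

/-! Restricted to the actions of `π`, the flux is a function `y` on states with
`y t = [t = s] + ∑_{g u = t} c u * y u`, where `g` is the successor map of `π` and `c = γ ∘ π`.
As all `|c u| < 1`, comparing sums of `|y|` shows that `y` vanishes on every set of states that
avoids `s` and is closed under predecessors, hence off the cycle through `s`. On the cycle each
state then has a single contributing predecessor, so `y` is multiplied by the discount at each
step and `y s = 1 + γ_C * y s`. Part (iii) is Bernoulli's inequality `1 - γ_a ^ k ≤ k (1 - γ_a)`. -/

open Function

namespace Finset

variable {ι : Type*}

theorem prod_le_of_mem {s : Finset ι} {f : ι → ℝ} (h0 : ∀ i ∈ s, 0 ≤ f i)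
    (h1 : ∀ i ∈ s, f i ≤ 1) {a : ι} (ha : a ∈ s) : ∏ i ∈ s, f i ≤ f a := by
  simpa using prod_le_prod_of_subset_of_le_one (singleton_subset_iff.mpr ha) h0
    (fun i hi _ => h1 i hi)

theorem abs_prod_lt_one {s : Finset ι} {f : ι → ℝ} (hs : s.Nonempty) (hf : ∀ i ∈ s, |f i| < 1) :
    |∏ i ∈ s, f i| < 1 := by
  obtain ⟨a, ha⟩ := hs
  rw [abs_prod]
  exact (prod_le_of_mem (fun _ _ => abs_nonneg _) (fun i hi => (hf i hi).le) ha).trans_lt (hf a ha)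

theorem one_sub_prod_le_card_mul (s : Finset ι) (f : ι → ℝ) {a : ι} (ha : 0 ≤ f a)
    (hdom : ∀ i ∈ s, f a ≤ f i) : 1 - ∏ i ∈ s, f i ≤ #s * (1 - f a) := by
  have hpow : f a ^ #s ≤ ∏ i ∈ s, f i := by
    simpa using prod_le_prod (fun _ _ => ha) hdom
  have := one_add_mul_sub_le_pow (by linarith : (-1 : ℝ) ≤ f a) #s
  linarith

end Finset

theorem Function.mem_image_range_iterate_iff {α : Type*} [DecidableEq α] {g : α → α} {p t : α}
    (hp : p ∈ periodicPts g) {N : ℕ} (hN : minimalPeriod g p ≤ N) :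
    t ∈ (Finset.range N).image (g^[·] p) ↔ t ∈ periodicOrbit g p := by
  rw [mem_periodicOrbit_iff hp, Finset.mem_image]
  constructor
  · rintro ⟨i, -, rfl⟩
    exact ⟨i, rfl⟩
  · rintro ⟨i, rfl⟩
    refine ⟨i % minimalPeriod g p, Finset.mem_range.mpr ?_, iterate_mod_minimalPeriod_eq⟩
    exact (Nat.mod_lt _ (minimalPeriod_pos_of_mem_periodicPts hp)).trans_le hN

noncomputable def cycleDiscount {α : Type*} (g : α → α) (c : α → ℝ) (s : α) : ℝ :=
  ∏ i ∈ Finset.range (minimalPeriod g s), c (g^[i] s)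

theorem abs_cycleDiscount_lt_one {α : Type*} {g : α → α} {c : α → ℝ} {s : α}
    (hc : ∀ u, |c u| < 1) (hs : s ∈ periodicPts g) : |cycleDiscount g c s| < 1 :=
  Finset.abs_prod_lt_one
    (Finset.nonempty_range_iff.mpr (minimalPeriod_pos_of_mem_periodicPts hs).ne') fun _ _ => hc _

section DiscountedFlux

variable {S : Type} [Fintype S] [DecidableEq S]

def IsDiscountedFlux (g : S → S) (c : S → ℝ) (s : S) (y : S → ℝ) : Prop :=
  ∀ t, y t = (if t = s then 1 else 0) + ∑ u ∈ univ.filter (fun u => g u = t), c u * y u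

namespace IsDiscountedFlux

variable {g : S → S} {c : S → ℝ} {s : S} {y : S → ℝ}

theorem eq_zero_of_mem (hy : IsDiscountedFlux g c s y) (hc : ∀ u, |c u| < 1) {U : Finset S}
    (hsU : s ∉ U) (hU : ∀ u, g u ∈ U → u ∈ U) {t : S} (ht : t ∈ U) : y t = 0 := by
  have hle : ∀ t ∈ U, |y t| ≤ ∑ u ∈ univ.filter (fun u => g u = t), |c u| * |y u| := by
    intro t ht
    rw [hy t, if_neg (ne_of_mem_of_not_mem ht hsU), zero_add]
    refine (abs_sum_le_sum_abs _ _).trans_eq ?_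
    simp only [abs_mul]
  have hsum : ∑ t ∈ U, |y t| ≤ ∑ u ∈ U, |c u| * |y u| :=
    calc ∑ t ∈ U, |y t|
        ≤ ∑ t ∈ U, ∑ u ∈ univ.filter (fun u => g u = t), |c u| * |y u| := sum_le_sum hle
      _ = ∑ u ∈ univ.filter (fun u => g u ∈ U), |c u| * |y u| :=
          sum_fiberwise_eq_sum_filter _ _ _ _
      _ ≤ ∑ u ∈ U, |c u| * |y u| :=
          sum_le_sum_of_subset_of_nonneg (fun u hu => hU u (mem_filter.mp hu).2)
            (fun _ _ _ => by positivity)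
  have hnonneg : ∀ u ∈ U, 0 ≤ (1 - |c u|) * |y u| := fun u _ =>
    mul_nonneg (sub_nonneg.mpr (hc u).le) (abs_nonneg _)
  have hzero := (sum_eq_zero_iff_of_nonneg hnonneg).mp <| le_antisymm
    (by simpa only [sub_mul, one_mul, sum_sub_distrib, sub_nonpos] using hsum)
    (sum_nonneg hnonneg)
  simpa [(sub_pos.mpr (hc t)).ne'] using hzero t ht

theorem eq_zero_of_forall_iterate_ne (hy : IsDiscountedFlux g c s y) (hc : ∀ u, |c u| < 1)
    {t : S} (ht : ∀ i, g^[i] s ≠ t) : y t = 0 := by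
  classical
  refine hy.eq_zero_of_mem hc (U := univ.filter fun t => ∀ i, g^[i] s ≠ t) ?_ ?_ (by simpa)
  · simpa using ⟨0, rfl⟩
  · intro u hu
    simp only [mem_filter, mem_univ, true_and] at hu ⊢
    rintro i rfl
    exact hu (i + 1) (iterate_succ_apply' g i s)

/-- Predecessors off the cycle carry no flux, and `g` is injective on the cycle. -/
theorem apply_iterate_succ (hy : IsDiscountedFlux g c s y) (hc : ∀ u, |c u| < 1)
    (hs : s ∈ periodicPts g) (j : ℕ) :
    y (g^[j + 1] s) = (if g^[j + 1] s = s then 1 else 0) + c (g^[j] s) * y (g^[j] s) := by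
  have hper := isPeriodicPt_minimalPeriod g s
  have hpos := minimalPeriod_pos_of_mem_periodicPts hs
  rw [hy, iterate_succ_apply']
  congr 1
  refine sum_eq_single_of_mem _ (by simp) fun u hu hne => ?_
  rw [hy.eq_zero_of_forall_iterate_ne hc, mul_zero]
  rintro i rfl
  exact hne ((hper.apply_iterate i).eq_of_apply_eq_same (hper.apply_iterate j) hpos
    (mem_filter.mp hu).2)

theorem apply_iterate_eq_prod_mul (hy : IsDiscountedFlux g c s y) (hc : ∀ u, |c u| < 1)
    (hs : s ∈ periodicPts g) {j : ℕ} (hj : j < minimalPeriod g s) :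
    y (g^[j] s) = (∏ i ∈ range j, c (g^[i] s)) * y s := by
  induction j with
  | zero => simp
  | succ j ih =>
    have hne : g^[j + 1] s ≠ g^[0] s := by
      rw [Ne, iterate_eq_iterate_iff_of_lt_minimalPeriod hj hj.pos]
      exact j.succ_ne_zero
    rw [iterate_zero_apply] at hne
    rw [hy.apply_iterate_succ hc hs, if_neg hne, ih (by omega), prod_range_succ]
    ring

theorem apply_self_eq (hy : IsDiscountedFlux g c s y) (hc : ∀ u, |c u| < 1)
    (hs : s ∈ periodicPts g) :
    y s = 1 + cycleDiscount g c s * y s := by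
  obtain ⟨m, hm⟩ := Nat.exists_eq_add_one_of_ne_zero (minimalPeriod_pos_of_mem_periodicPts hs).ne'
  have hy_m := hy.apply_iterate_succ hc hs m
  rw [← hm, iterate_minimalPeriod, if_pos rfl,
    hy.apply_iterate_eq_prod_mul hc hs (by omega)] at hy_m
  rw [cycleDiscount, hm, prod_range_succ]
  linear_combination hy_m

theorem apply_iterate_eq_div (hy : IsDiscountedFlux g c s y) (hc : ∀ u, |c u| < 1)
    (hs : s ∈ periodicPts g) {j : ℕ} (hj : j < minimalPeriod g s) :
    y (g^[j] s) = (∏ i ∈ range j, c (g^[i] s)) / (1 - cycleDiscount g c s) := by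
  have hden : 1 - cycleDiscount g c s ≠ 0 := sub_ne_zero.mpr fun h =>
    (abs_cycleDiscount_lt_one hc hs).ne (by rw [← h, abs_one])
  rw [hy.apply_iterate_eq_prod_mul hc hs hj, eq_div_iff hden]
  linear_combination (∏ i ∈ range j, c (g^[i] s)) * hy.apply_self_eq hc hs

theorem apply_iterate_mem_Icc (hy : IsDiscountedFlux g c s y) (hc : ∀ u, |c u| < 1)
    (hc₀ : ∀ u, 0 ≤ c u) (hs : s ∈ periodicPts g) {j : ℕ} (hj : j < minimalPeriod g s) :
    y (g^[j] s) ∈ Set.Icc (cycleDiscount g c s / (1 - cycleDiscount g c s))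
      (1 / (1 - cycleDiscount g c s)) := by
  have hc₁ (u : S) : c u ≤ 1 := (le_abs_self _).trans (hc u).le
  have hden : 0 < 1 - cycleDiscount g c s :=
    sub_pos.mpr ((le_abs_self _).trans_lt (abs_cycleDiscount_lt_one hc hs))
  rw [hy.apply_iterate_eq_div hc hs hj]
  exact ⟨div_le_div_of_nonneg_right (prod_le_prod_of_subset_of_le_one
      (range_subset_range.mpr hj.le) (fun _ _ => hc₀ _) fun _ _ _ => hc₁ _) hden.le,
    div_le_div_of_nonneg_right (prod_le_one (fun _ _ => hc₀ _) fun _ _ => hc₁ _) hden.le⟩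

end IsDiscountedFlux

end DiscountedFlux

namespace DetMDP

variable {S A : Type} {M : DetMDP S A} {π : S → A}

theorem IsPolicy.injective (hπ : M.IsPolicy π) : Injective π := fun s₁ s₂ h => by
  rw [← hπ s₁, ← hπ s₂, h]

variable [Fintype S] [DecidableEq A]

theorem IsCycleOf.card_le {C : Finset A} (hC : M.IsCycleOf π C) : #C ≤ Fintype.card S := by
  obtain ⟨s₀, -, rfl⟩ := hC
  exact card_image_le.trans (card_range _).le

theorem IsCycleOf.eq_image_range_minimalPeriod {C : Finset A} {s : S} (hπ : M.IsPolicy π)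
    (hC : M.IsCycleOf π C) (hs : π s ∈ C) :
    s ∈ periodicPts (M.step π) ∧
      C = (range (minimalPeriod (M.step π) s)).image fun i => π ((M.step π)^[i] s) := by
  classical
  set g := M.step π
  obtain ⟨s₀, ⟨k, hk, hks₀ : IsPeriodicPt g k s₀⟩, rfl⟩ := hC
  obtain ⟨hk₀, hkn⟩ := mem_Icc.mp hk
  have hs₀ : s₀ ∈ periodicPts g := mk_mem_periodicPts hk₀ hks₀
  obtain ⟨i₀, -, hi₀⟩ := mem_image.mp hs
  obtain rfl := hπ.injective hi₀
  have hper : g^[i₀] s₀ ∈ periodicPts g := mk_mem_periodicPts hk₀ (hks₀.apply_iterate i₀)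
  have horbit : (range (Fintype.card S)).image (g^[·] s₀) =
      (range (minimalPeriod g (g^[i₀] s₀))).image (g^[·] (g^[i₀] s₀)) := by
    ext t
    rw [mem_image_range_iterate_iff hs₀ ((hks₀.minimalPeriod_le hk₀).trans hkn),
      mem_image_range_iterate_iff hper le_rfl, periodicOrbit_apply_iterate_eq hs₀]
  exact ⟨hper, by simpa only [image_image, comp_def] using congr_arg (image π) horbit⟩

theorem IsCycleOf.prod_eq_cycleDiscount {C : Finset A} {s : S} (hπ : M.IsPolicy π)
    (hC : M.IsCycleOf π C) (hs : π s ∈ C) (γ : A → ℝ) :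
    ∏ b ∈ C, γ b = cycleDiscount (M.step π) (γ ∘ π) s := by
  rw [(hC.eq_image_range_minimalPeriod hπ hs).2, prod_image fun i hi j hj h =>
    iterate_injOn_Iio_minimalPeriod (mem_range.mp hi) (mem_range.mp hj) (hπ.injective h)]
  rfl

variable [Fintype A] [DecidableEq S]

theorem IsFluxFrom.isDiscountedFlux {γ : A → ℝ} {s : S} {x : A → ℝ} (hπ : M.IsPolicy π)
    (hx : M.IsFluxFrom γ π s x) : IsDiscountedFlux (M.step π) (γ ∘ π) s (x ∘ π) := by
  intro t
  have hsrc : ∑ a ∈ univ.filter (fun a => M.src a = t), x a = x (π t) :=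
    sum_eq_single_of_mem _ (by simp [hπ t]) fun a ha hne =>
      hx.1 a (by rwa [(mem_filter.mp ha).2])
  have hpolicy : ∀ a, M.tgt a = t → a ∉ (univ.filter fun u => M.step π u = t).image π →
      γ a * x a = 0 := by
    intro a hat ha
    refine mul_eq_zero_of_right _ (hx.1 a fun h => ha (mem_image.mpr ⟨M.src a, ?_, h.symm⟩))
    rw [mem_filter, step, ← h]
    exact ⟨mem_univ _, hat⟩
  have htgt : ∑ a ∈ univ.filter (fun a => M.tgt a = t), γ a * x a =
      ∑ u ∈ univ.filter (fun u => M.step π u = t), γ (π u) * x (π u) := by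
    refine (sum_subset (fun a ha => ?_) fun a ha hna => hpolicy a (mem_filter.mp ha).2 hna).symm
      |>.trans (sum_image (f := fun a => γ a * x a) hπ.injective.injOn)
    obtain ⟨u, hu, rfl⟩ := mem_image.mp ha
    exact mem_filter.mpr ⟨mem_univ _, (mem_filter.mp hu).2⟩
  simpa only [comp_apply, hsrc, htgt] using hx.2 t

end DetMDP

/-- Flux bounds on a cycle `C` of `π` dominated by `γ_a`:
for a state `s` on `C` with action `a' = π s` and any `a'' ∈ C`,
(i) `x^{π,s}_{a'} = 1/(1−γ_C)`; (ii) `γ_C/(1−γ_C) ≤ x^{π,s}_{a''} ≤ 1/(1−γ_C)`;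
(iii) `1/(n(1−γ_a)) ≤ 1/(1−γ_C) ≤ 1/(1−γ_a)`. -/
theorem cycle_flux_bounds_nonuniform
    {S A : Type} [Fintype S] [Fintype A] [DecidableEq S] [DecidableEq A]
    (M : DetMDP S A) (γ : A → ℝ) (hγ : ∀ a : A, 0 ≤ γ a ∧ γ a < 1)
    (π : S → A) (hπ : M.IsPolicy π)
    (C : Finset A) (hC : M.IsCycleOf π C)
    (a : A) (ha : a ∈ C) (hdom : ∀ a' ∈ C, γ a ≤ γ a')
    (s : S) (hs : π s ∈ C)
    (x : A → ℝ) (hx : M.IsFluxFrom γ π s x)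
    (a'' : A) (ha'' : a'' ∈ C) :
    x (π s) = 1 / (1 - ∏ b ∈ C, γ b) ∧
    ((∏ b ∈ C, γ b) / (1 - ∏ b ∈ C, γ b) ≤ x a'' ∧
      x a'' ≤ 1 / (1 - ∏ b ∈ C, γ b)) ∧
    (1 / ((Fintype.card S : ℝ) * (1 - γ a)) ≤ 1 / (1 - ∏ b ∈ C, γ b) ∧
      1 / (1 - ∏ b ∈ C, γ b) ≤ 1 / (1 - γ a)) := by
  obtain ⟨hper, hCeq⟩ := hC.eq_image_range_minimalPeriod hπ hs
  have hy := hx.isDiscountedFlux hπ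
  have hc (u : S) : |(γ ∘ π) u| < 1 :=
    abs_lt.mpr ⟨neg_one_lt_zero.trans_le (hγ (π u)).1, (hγ (π u)).2⟩
  have hprod := hC.prod_eq_cycleDiscount hπ hs γ
  have hγC : ∏ b ∈ C, γ b ≤ γ a :=
    prod_le_of_mem (fun b _ => (hγ b).1) (fun b _ => (hγ b).2.le) ha
  have hden : 0 < 1 - ∏ b ∈ C, γ b := by linarith [(hγ a).2]
  obtain ⟨j, hj, rfl⟩ := mem_image.mp (hCeq ▸ ha'')
  refine ⟨?_, ?_, one_div_le_one_div_of_le hden ?_, one_div_le_one_div_of_le ?_ ?_⟩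
  · simpa [hprod] using
      hy.apply_iterate_eq_div hc hper (minimalPeriod_pos_of_mem_periodicPts hper)
  · rw [hprod]
    exact hy.apply_iterate_mem_Icc hc (fun u => (hγ (π u)).1) hper (mem_range.mp hj)
  · calc 1 - ∏ b ∈ C, γ b ≤ #C * (1 - γ a) := one_sub_prod_le_card_mul C γ (hγ a).1 hdom
      _ ≤ Fintype.card S * (1 - γ a) := by
        gcongr
        · linarith [(hγ a).2]
        · exact hC.card_le
  · linarith [(hγ a).2]
  · linarith
end

section
/- In any execution of the simplex method with the highest-gain pivoting rule on a deterministic MDP with nonuniform discounts, starting from any policy in the execution, within O(n² m log n) iterations either the execution terminates or some iteration creates a new cycle. -/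
open Finset

/-!
Along a stretch of highest-gain pivots that creates no new cycle, every cycle of a later policy is
a cycle of each earlier one, and a policy's values on a cycle depend on the cycle alone. Hence the
final values exceed the current ones by at most `n` times the current highest gain, and the
residual `∑ₛ (v_T s - v_t s)` shrinks by a factor `1 - 1/n²` per pivot.

At each time either an action of the current policy has gain below `-residual/(2n²)` for the final
values, or a periodic state of the current policy carries a share `1/(2n)` of the residual. The
same witness recurs only while the residual has dropped by less than a factor `2n²`, i.e. within
`3n² log n` pivots. With `m + n` possible witnesses the stretch has length `O(n² m log n)`.
-/

theorem exists_periodic_iterate_card {α : Type*} [Fintype α] (f : α → α) (x : α) :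
    ∃ k ∈ Icc 1 (Fintype.card α), f^[k] (f^[Fintype.card α] x) = f^[Fintype.card α] x := by
  obtain ⟨i, j, hij, hf⟩ := Fintype.exists_ne_map_eq_of_card_lt
    (fun i : Fin (Fintype.card α + 1) => f^[i] x) (by simp)
  wlog hlt : i < j generalizing i j
  · exact this j i hij.symm hf.symm (lt_of_le_of_ne (not_lt.1 hlt) hij.symm)
  have hj := j.isLt
  refine ⟨j - i, mem_Icc.2 ⟨by omega, by omega⟩, ?_⟩
  calc f^[j - i] (f^[Fintype.card α] x) = f^[Fintype.card α - i] (f^[j] x) := by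
        rw [← Function.iterate_add_apply, ← Function.iterate_add_apply]
        congr 1
        omega
    _ = f^[Fintype.card α] x := by
        rw [← hf, ← Function.iterate_add_apply]
        congr 1
        omega

theorem le_mul_log_of_le_pow {n : ℝ} (hn : 2 ≤ n) {j : ℕ}
    (hj : 1 / (2 * n ^ 2) ≤ (1 - 1 / n ^ 2) ^ j) : (j : ℝ) ≤ 3 * n ^ 2 * Real.log n := by
  have hn2 : 0 < n ^ 2 := by positivity
  have hexp : 1 / (2 * n ^ 2) ≤ Real.exp (-(j / n ^ 2)) := by
    calc 1 / (2 * n ^ 2) ≤ (1 - 1 / n ^ 2) ^ j := hj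
      _ ≤ Real.exp (-(1 / n ^ 2)) ^ j := by
        gcongr
        · rw [sub_nonneg]
          exact div_le_one_of_le₀ (by nlinarith) hn2.le
        · exact Real.one_sub_le_exp_neg _
      _ = Real.exp (-(j / n ^ 2)) := by rw [← Real.exp_nat_mul]; ring_nf
  have hlog : j / n ^ 2 ≤ Real.log (2 * n ^ 2) := by
    have := (Real.log_le_iff_le_exp (by positivity)).2 hexp
    rw [one_div, Real.log_inv] at this
    linarith
  have hcube : Real.log (2 * n ^ 2) ≤ 3 * Real.log n := by
    calc Real.log (2 * n ^ 2) ≤ Real.log (n ^ 3) := Real.log_le_log (by positivity) (by nlinarith)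
      _ = 3 * Real.log n := by rw [Real.log_pow]; norm_num
  rw [div_le_iff₀ hn2] at hlog
  nlinarith

theorem Finset.card_le_succ_of_forall_le_add {s : Finset ℕ} {K : ℕ}
    (h : ∀ x ∈ s, ∀ y ∈ s, x ≤ y → y ≤ x + K) : s.card ≤ K + 1 := by
  rcases s.eq_empty_or_nonempty with rfl | hs
  · simp
  calc s.card ≤ (Icc (s.min' hs) (s.min' hs + K)).card :=
        card_le_card fun y hy =>
          mem_Icc.2 ⟨s.min'_le y hy, h _ (s.min'_mem hs) y hy (s.min'_le y hy)⟩
    _ = K + 1 := by simp only [Nat.card_Icc]; omega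

theorem add_mul_floor_succ_lt_floor {n m : ℕ} (hn : 2 ≤ n) (hnm : n ≤ m) :
    (m + n) * (⌊3 * (n : ℝ) ^ 2 * Real.log n⌋₊ + 1) <
      ⌊9 * (n : ℝ) ^ 2 * m * Real.log n⌋₊ := by
  have hn' : (2 : ℝ) ≤ n := by exact_mod_cast hn
  have hnm' : (n : ℝ) ≤ m := by exact_mod_cast hnm
  have hlog : 0.69 ≤ Real.log n :=
    (Real.log_two_gt_d9.trans_le (Real.log_le_log (by norm_num) hn')).le.trans' (by norm_num)
  have hY : 2 ≤ (n : ℝ) ^ 2 * Real.log n := by nlinarith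
  have hfloor := Nat.floor_le (show 0 ≤ 3 * (n : ℝ) ^ 2 * Real.log n by positivity)
  apply Nat.lt_of_succ_le
  apply Nat.le_floor
  push_cast
  nlinarith

namespace DetMDP

variable {S A : Type} {M : DetMDP S A} {γ : A → ℝ}

section Evaluation

variable {π : S → A}

theorem gain_self_eq_zero {v : S → ℝ} (hπ : M.IsPolicy π) (hv : M.IsValue γ π v) (s : S) :
    M.gain γ v (π s) = 0 := by
  rw [gain, hπ s, ← hv s, sub_self]

theorem sub_eq_gain_add {v w : S → ℝ} (hπ : M.IsPolicy π) (hw : M.IsValue γ π w) (s : S) :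
    w s - v s = M.gain γ v (π s) + γ (π s) * (w (M.step π s) - v (M.step π s)) := by
  rw [gain, hπ s, hw s, step]
  ring

def pathDiscount (M : DetMDP S A) (γ : A → ℝ) (π : S → A) (s : S) (i : ℕ) : ℝ :=
  ∏ j ∈ range i, γ (π ((M.step π)^[j] s))

theorem pathDiscount_nonneg (hγ : ∀ a, 0 ≤ γ a ∧ γ a < 1) (s : S) (i : ℕ) :
    0 ≤ M.pathDiscount γ π s i :=
  prod_nonneg fun _ _ => (hγ _).1

theorem pathDiscount_le_one (hγ : ∀ a, 0 ≤ γ a ∧ γ a < 1) (s : S) (i : ℕ) :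
    M.pathDiscount γ π s i ≤ 1 :=
  prod_le_one (fun _ _ => (hγ _).1) fun _ _ => (hγ _).2.le

theorem pathDiscount_lt_one (hγ : ∀ a, 0 ≤ γ a ∧ γ a < 1) (s : S) {i : ℕ} (hi : 0 < i) :
    M.pathDiscount γ π s i < 1 := by
  obtain ⟨i, rfl⟩ := Nat.exists_eq_add_of_lt hi
  rw [pathDiscount, prod_range_succ']
  calc (∏ j ∈ range (0 + i), γ (π ((M.step π)^[j + 1] s))) * γ (π s)
      ≤ 1 * γ (π s) := by
        gcongr
        · exact (hγ _).1
        · exact prod_le_one (fun _ _ => (hγ _).1) fun _ _ => (hγ _).2.le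
    _ < 1 := by rw [one_mul]; exact (hγ _).2

theorem sub_eq_sum_pathDiscount_mul_gain {v w : S → ℝ} (hπ : M.IsPolicy π)
    (hw : M.IsValue γ π w) (s : S) (N : ℕ) :
    w s - v s = ∑ i ∈ range N, M.pathDiscount γ π s i * M.gain γ v (π ((M.step π)^[i] s)) +
      M.pathDiscount γ π s N * (w ((M.step π)^[N] s) - v ((M.step π)^[N] s)) := by
  induction N with
  | zero => simp [pathDiscount]
  | succ N ih =>
    rw [ih, sub_eq_gain_add hπ hw, sum_range_succ, pathDiscount, pathDiscount, prod_range_succ,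
      Function.iterate_succ_apply']
    ring

/-- At a minimum point `s₀` of `d`, `γ d s₀ ≤ d s₀` with `γ < 1` forces `0 ≤ d s₀`. -/
theorem nonneg_of_discount_mul_le [Finite S] (hγ : ∀ a, 0 ≤ γ a ∧ γ a < 1) {d : S → ℝ}
    (hd : ∀ s, γ (π s) * d (M.step π s) ≤ d s) (s : S) : 0 ≤ d s := by
  have : Nonempty S := ⟨s⟩
  obtain ⟨s₀, hs₀⟩ := Finite.exists_min d
  have h₀ : γ (π s₀) * d s₀ ≤ d s₀ :=
    (mul_le_mul_of_nonneg_left (hs₀ _) (hγ _).1).trans (hd s₀)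
  have : 0 ≤ d s₀ := by nlinarith [(hγ (π s₀)).2]
  exact this.trans (hs₀ s)

theorem add_gain_le_value [Finite S] (hγ : ∀ a, 0 ≤ γ a ∧ γ a < 1) {v w : S → ℝ}
    (hπ : M.IsPolicy π) (hw : M.IsValue γ π w) (hgain : ∀ s, 0 ≤ M.gain γ v (π s))
    (s : S) : v s + M.gain γ v (π s) ≤ w s := by
  have hd : ∀ s, 0 ≤ w s - v s := nonneg_of_discount_mul_le hγ fun s => by
    rw [sub_eq_gain_add (v := v) hπ hw s]
    linarith [hgain s]
  have := sub_eq_gain_add (v := v) hπ hw s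
  nlinarith [mul_nonneg (hγ (π s)).1 (hd (M.step π s))]

theorem value_eq_of_eqOn_orbit (hγ : ∀ a, 0 ≤ γ a ∧ γ a < 1) {π' : S → A}
    {v v' : S → ℝ} (hπ : M.IsPolicy π) (hπ' : M.IsPolicy π') (hv : M.IsValue γ π v)
    (hv' : M.IsValue γ π' v')
    {z : S} {k : ℕ} (hk : 0 < k) (hz : (M.step π)^[k] z = z)
    (hagree : ∀ i, π' ((M.step π)^[i] z) = π ((M.step π)^[i] z)) : v z = v' z := by
  have h := sub_eq_sum_pathDiscount_mul_gain (v := v') hπ hv z k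
  simp only [← hagree, gain_self_eq_zero hπ' hv', mul_zero, sum_const_zero, zero_add, hz] at h
  have := pathDiscount_lt_one (M := M) (π := π) hγ z hk
  nlinarith

end Evaluation

section Cycles

variable [Fintype S] [DecidableEq A] {π π' : S → A}

theorem eq_on_orbit_of_isCycleOf (hπ : M.IsPolicy π) (hπ' : M.IsPolicy π') {z : S} {k : ℕ}
    (hk : k ∈ Icc 1 (Fintype.card S)) (hz : (M.step π')^[k] z = z)
    (hC : M.IsCycleOf π ((range (Fintype.card S)).image fun i => π' ((M.step π')^[i] z)))
    (i : ℕ) : π ((M.step π')^[i] z) = π' ((M.step π')^[i] z) := by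
  obtain ⟨y, -, hCy⟩ := hC
  rw [mem_Icc] at hk
  have hmem : π' ((M.step π')^[i] z) ∈
      (range (Fintype.card S)).image fun i => π' ((M.step π')^[i] z) := by
    rw [← Function.IsPeriodicPt.iterate_mod_apply (f := M.step π') hz]
    exact mem_image_of_mem _ (mem_range.2 ((Nat.mod_lt _ hk.1).trans_le hk.2))
  obtain ⟨j, -, hj⟩ := mem_image.1 (hCy ▸ hmem)
  have hsrc : (M.step π)^[j] y = (M.step π')^[i] z := by
    rw [← hπ ((M.step π)^[j] y), hj, hπ']
  simpa only [hsrc] using hj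

/-- Telescoping `n` steps of `π'`: the tail vanishes because `f^n s` lies on a cycle of `π'`,
hence of `π`, where the two value vectors agree. -/
theorem value_sub_le_card_mul (hγ : ∀ a, 0 ≤ γ a ∧ γ a < 1) {v v' : S → ℝ}
    (hπ : M.IsPolicy π) (hπ' : M.IsPolicy π') (hv : M.IsValue γ π v)
    (hv' : M.IsValue γ π' v')
    (hcyc : ∀ C, M.IsCycleOf π' C → M.IsCycleOf π C) {G : ℝ} (hG : 0 ≤ G)
    (hgain : ∀ a, M.gain γ v a ≤ G) (s : S) :
    v' s - v s ≤ Fintype.card S * G := by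
  obtain ⟨k, hk, hz⟩ := exists_periodic_iterate_card (M.step π') s
  have hk₀ : 0 < k := (mem_Icc.1 hk).1
  have hfrozen : v' ((M.step π')^[Fintype.card S] s) = v ((M.step π')^[Fintype.card S] s) :=
    value_eq_of_eqOn_orbit hγ hπ' hπ hv' hv hk₀ hz
      (eq_on_orbit_of_isCycleOf hπ hπ' hk hz (hcyc _ ⟨_, ⟨k, hk, hz⟩, rfl⟩))
  rw [sub_eq_sum_pathDiscount_mul_gain hπ' hv', hfrozen, sub_self, mul_zero, add_zero]
  calc _ ≤ ∑ _i ∈ range (Fintype.card S), G := sum_le_sum fun i _ => by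
        have h0 := pathDiscount_nonneg (M := M) (π := π') hγ s i
        have h1 := pathDiscount_le_one (M := M) (π := π') hγ s i
        rcases le_total 0 (M.gain γ v (π' ((M.step π')^[i] s))) with hg | hg
        · exact (mul_le_of_le_one_left hg h1).trans (hgain _)
        · exact (mul_nonpos_of_nonneg_of_nonpos h0 hg).trans hG
    _ = Fintype.card S * G := by simp

end Cycles

/-- Telescoping `n` steps of `π` from `s`: unless one of the `n` terms is below
`-(w s - v s) / (2n)`, the tail at the periodic point `f^n s` exceeds `(w s - v s) / 2`. -/
theorem exists_gain_le_or_exists_periodic [Fintype S] (hγ : ∀ a, 0 ≤ γ a ∧ γ a < 1)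
    {π : S → A} {v : S → ℝ} (hπ : M.IsPolicy π) (hv : M.IsValue γ π v) (w : S → ℝ)
    {s : S} (hs : 0 < w s - v s) :
    (∃ b, π (M.src b) = b ∧ M.gain γ w b ≤ -((w s - v s) / (2 * Fintype.card S))) ∨
      ∃ z, (∃ k ∈ Icc 1 (Fintype.card S), (M.step π)^[k] z = z) ∧
        (w s - v s) / 2 ≤ w z - v z := by
  set n := Fintype.card S
  have hn : (0 : ℝ) < n := Nat.cast_pos.2 (Fintype.card_pos_iff.2 ⟨s⟩)
  have htel := sub_eq_sum_pathDiscount_mul_gain (v := w) hπ hv s n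
  by_cases hterm : ∃ i ∈ range n,
      M.pathDiscount γ π s i * M.gain γ w (π ((M.step π)^[i] s)) ≤ -((w s - v s) / (2 * n))
  · obtain ⟨i, -, hi⟩ := hterm
    refine .inl ⟨π ((M.step π)^[i] s), by rw [hπ], ?_⟩
    have h0 := pathDiscount_nonneg (M := M) (π := π) hγ s i
    have h1 := pathDiscount_le_one (M := M) (π := π) hγ s i
    have : 0 < (w s - v s) / (2 * n) := by positivity
    have hg : M.gain γ w (π ((M.step π)^[i] s)) ≤ 0 := by
      by_contra! hg
      nlinarith [mul_nonneg h0 hg.le]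
    nlinarith [mul_nonneg (sub_nonneg.2 h1) (neg_nonneg.2 hg)]
  · simp only [not_exists, not_and, not_le] at hterm
    obtain ⟨k, hk, hz⟩ := exists_periodic_iterate_card (M.step π) s
    refine .inr ⟨_, ⟨k, hk, hz⟩, ?_⟩
    have hsum : -((w s - v s) / 2) <
        ∑ i ∈ range n, M.pathDiscount γ π s i * M.gain γ w (π ((M.step π)^[i] s)) := by
      calc -((w s - v s) / 2) = ∑ _i ∈ range n, -((w s - v s) / (2 * n)) := by
            simp only [sum_const, card_range, nsmul_eq_mul]
            field_simp
        _ < _ := sum_lt_sum_of_nonempty ⟨0, mem_range.2 (Fintype.card_pos_iff.2 ⟨s⟩)⟩ hterm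
    have h0 := pathDiscount_nonneg (M := M) (π := π) hγ s n
    have h1 := pathDiscount_le_one (M := M) (π := π) hγ s n
    nlinarith

/-- `T` consecutive highest-gain pivots from `π 0` to `π T`, the `t`-th entering the action
`a t`, none of which creates a new cycle; `v t` is the value vector of `π t`. -/
structure NoNewCycleRun [Fintype S] [DecidableEq S] [DecidableEq A] (M : DetMDP S A)
    (γ : A → ℝ) (π : ℕ → S → A) (v : ℕ → S → ℝ) (a : ℕ → A) (T : ℕ) :
    Prop where
  isPolicy : ∀ t, M.IsPolicy (π t)
  isValue : ∀ t ≤ T, M.IsValue γ (π t) (v t)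
  gain_pos : ∀ t < T, 0 < M.gain γ (v t) (a t)
  gain_le : ∀ t < T, ∀ b, M.gain γ (v t) b ≤ M.gain γ (v t) (a t)
  update_eq : ∀ t < T, π (t + 1) = Function.update (π t) (M.src (a t)) (a t)
  isCycleOf_of_succ : ∀ t < T, ∀ C, M.IsCycleOf (π (t + 1)) C → M.IsCycleOf (π t) C

def residual [Fintype S] (v : ℕ → S → ℝ) (T t : ℕ) : ℝ :=
  ∑ s, (v T s - v t s)

def IsProgressWitness [Fintype S] (M : DetMDP S A) (γ : A → ℝ) (π : ℕ → S → A)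
    (v : ℕ → S → ℝ) (T t : ℕ) : A ⊕ S → Prop
  | .inl b => π t (M.src b) = b ∧
      M.gain γ (v T) b ≤ -(residual v T t / (2 * (Fintype.card S : ℝ) ^ 2))
  | .inr z => (∃ k ∈ Icc 1 (Fintype.card S), (M.step (π t))^[k] z = z) ∧
      residual v T t / (2 * Fintype.card S) ≤ v T z - v t z

namespace NoNewCycleRun

variable [Fintype S] [DecidableEq S] [DecidableEq A] {π : ℕ → S → A} {v : ℕ → S → ℝ}
  {a : ℕ → A} {T : ℕ}

theorem isCycleOf_of_le (h : M.NoNewCycleRun γ π v a T) {t t' : ℕ} (htt' : t ≤ t')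
    (ht' : t' ≤ T) {C : Finset A} (hC : M.IsCycleOf (π t') C) : M.IsCycleOf (π t) C := by
  induction t', htt' using Nat.le_induction with
  | base => exact hC
  | succ t' htt' ih => exact ih (by omega) (h.isCycleOf_of_succ t' (by omega) C hC)

theorem gain_succ_nonneg (h : M.NoNewCycleRun γ π v a T) {t : ℕ} (ht : t < T) (s : S) :
    0 ≤ M.gain γ (v t) (π (t + 1) s) := by
  rw [h.update_eq t ht]
  rcases eq_or_ne s (M.src (a t)) with rfl | hs
  · rw [Function.update_self]
    exact (h.gain_pos t ht).le
  · rw [Function.update_of_ne hs, gain_self_eq_zero (h.isPolicy t) (h.isValue t ht.le)]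

theorem add_gain_le_succ (h : M.NoNewCycleRun γ π v a T) (hγ : ∀ a, 0 ≤ γ a ∧ γ a < 1)
    {t : ℕ} (ht : t < T) (s : S) :
    v t s + M.gain γ (v t) (π (t + 1) s) ≤ v (t + 1) s :=
  add_gain_le_value hγ (h.isPolicy _) (h.isValue _ ht) (h.gain_succ_nonneg ht) s

theorem add_gain_le_src (h : M.NoNewCycleRun γ π v a T) (hγ : ∀ a, 0 ≤ γ a ∧ γ a < 1)
    {t : ℕ} (ht : t < T) :
    v t (M.src (a t)) + M.gain γ (v t) (a t) ≤ v (t + 1) (M.src (a t)) := by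
  simpa [h.update_eq t ht] using h.add_gain_le_succ hγ ht (M.src (a t))

theorem value_le_of_le (h : M.NoNewCycleRun γ π v a T) (hγ : ∀ a, 0 ≤ γ a ∧ γ a < 1)
    {t t' : ℕ} (htt' : t ≤ t') (ht' : t' ≤ T) (s : S) : v t s ≤ v t' s := by
  induction t', htt' using Nat.le_induction with
  | base => exact le_rfl
  | succ t' htt' ih =>
    have hsucc := h.add_gain_le_succ hγ (t := t') (by omega) s
    linarith [ih (by omega), h.gain_succ_nonneg (t := t') (by omega) s]

theorem final_sub_le (h : M.NoNewCycleRun γ π v a T) (hγ : ∀ a, 0 ≤ γ a ∧ γ a < 1)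
    {t : ℕ} (ht : t < T) (s : S) :
    v T s - v t s ≤ Fintype.card S * M.gain γ (v t) (a t) :=
  value_sub_le_card_mul hγ (h.isPolicy t) (h.isPolicy T) (h.isValue t ht.le)
    (h.isValue T le_rfl) (fun _ => h.isCycleOf_of_le ht.le le_rfl) (h.gain_pos t ht).le
    (h.gain_le t ht) s

theorem final_sub_le_residual (h : M.NoNewCycleRun γ π v a T)
    (hγ : ∀ a, 0 ≤ γ a ∧ γ a < 1) {t : ℕ} (ht : t ≤ T) (s : S) :
    v T s - v t s ≤ residual v T t :=
  single_le_sum (f := fun s => v T s - v t s)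
    (fun s _ => sub_nonneg.2 (h.value_le_of_le hγ ht le_rfl s)) (mem_univ s)

theorem residual_le (h : M.NoNewCycleRun γ π v a T) (hγ : ∀ a, 0 ≤ γ a ∧ γ a < 1)
    {t : ℕ} (ht : t < T) :
    residual v T t ≤ (Fintype.card S : ℝ) ^ 2 * M.gain γ (v t) (a t) := by
  calc residual v T t ≤ ∑ _s : S, Fintype.card S * M.gain γ (v t) (a t) :=
        sum_le_sum fun s _ => h.final_sub_le hγ ht s
    _ = _ := by simp [sq, mul_assoc]

theorem gain_le_residual (h : M.NoNewCycleRun γ π v a T) (hγ : ∀ a, 0 ≤ γ a ∧ γ a < 1)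
    {t : ℕ} (ht : t < T) : M.gain γ (v t) (a t) ≤ residual v T t := by
  linarith [h.add_gain_le_src hγ ht, h.final_sub_le_residual hγ ht.le (M.src (a t)),
    h.value_le_of_le hγ (Nat.succ_le_of_lt ht) le_rfl (M.src (a t))]

theorem residual_pos (h : M.NoNewCycleRun γ π v a T) (hγ : ∀ a, 0 ≤ γ a ∧ γ a < 1)
    {t : ℕ} (ht : t < T) : 0 < residual v T t :=
  (h.gain_pos t ht).trans_le (h.gain_le_residual hγ ht)

theorem residual_succ_le (h : M.NoNewCycleRun γ π v a T) (hγ : ∀ a, 0 ≤ γ a ∧ γ a < 1)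
    {t : ℕ} (ht : t < T) :
    residual v T (t + 1) ≤ (1 - 1 / (Fintype.card S : ℝ) ^ 2) * residual v T t := by
  have hn : (0 : ℝ) < (Fintype.card S : ℝ) ^ 2 := by
    have := Fintype.card_pos_iff.2 ⟨M.src (a t)⟩
    positivity
  have hgain : M.gain γ (v t) (a t) ≤ ∑ s, (v (t + 1) s - v t s) := by
    have := single_le_sum (f := fun s => v (t + 1) s - v t s)
      (fun s _ => sub_nonneg.2 (h.value_le_of_le hγ (Nat.le_succ t) ht s))
      (mem_univ (M.src (a t)))
    linarith [h.add_gain_le_src hγ ht]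
  have hsplit : residual v T (t + 1) = residual v T t - ∑ s, (v (t + 1) s - v t s) := by
    simp only [residual, ← sum_sub_distrib]
    exact sum_congr rfl fun s _ => by ring
  have := h.residual_le hγ ht
  rw [hsplit, sub_mul, one_mul, one_div_mul_eq_div]
  have : residual v T t / (Fintype.card S : ℝ) ^ 2 ≤ M.gain γ (v t) (a t) := by
    rwa [div_le_iff₀' hn]
  linarith

theorem residual_le_pow_mul (h : M.NoNewCycleRun γ π v a T) (hγ : ∀ a, 0 ≤ γ a ∧ γ a < 1)
    {t t' : ℕ} (htt' : t ≤ t') (ht' : t' ≤ T) :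
    residual v T t' ≤ (1 - 1 / (Fintype.card S : ℝ) ^ 2) ^ (t' - t) * residual v T t := by
  induction t', htt' using Nat.le_induction with
  | base => simp
  | succ t' htt' ih =>
    have hq : 0 ≤ 1 - 1 / (Fintype.card S : ℝ) ^ 2 := by
      rw [sub_nonneg]
      exact div_le_one_of_le₀ (one_le_pow₀ (Nat.one_le_cast.2
        (Fintype.card_pos_iff.2 ⟨M.src (a t')⟩))) (by positivity)
    rw [Nat.sub_add_comm htt', pow_succ', mul_assoc]
    exact (h.residual_succ_le hγ (by omega)).trans
      (mul_le_mul_of_nonneg_left (ih (by omega)) hq)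

theorem exists_isProgressWitness (h : M.NoNewCycleRun γ π v a T)
    (hγ : ∀ a, 0 ≤ γ a ∧ γ a < 1) {t : ℕ} (ht : t < T) :
    ∃ w, M.IsProgressWitness γ π v T t w := by
  set n := (Fintype.card S : ℝ)
  have hn : 0 < n := Nat.cast_pos.2 (Fintype.card_pos_iff.2 ⟨M.src (a t)⟩)
  have hres := h.residual_pos hγ ht
  obtain ⟨s, -, hs⟩ := exists_le_of_sum_le (univ_nonempty_iff.2 ⟨M.src (a t)⟩)
    (show ∑ _s : S, residual v T t / n ≤ ∑ s, (v T s - v t s) by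
      rw [sum_const, card_univ, nsmul_eq_mul, mul_div_cancel₀ _ hn.ne']
      rfl)
  have hs' : residual v T t ≤ n * (v T s - v t s) := by rwa [div_le_iff₀' hn] at hs
  rcases exists_gain_le_or_exists_periodic hγ (h.isPolicy t) (h.isValue t ht.le) (v T)
    ((div_pos hres hn).trans_le hs) with ⟨b, hb, hgain⟩ | ⟨z, hz, hgap⟩
  · refine ⟨.inl b, hb, hgain.trans (neg_le_neg ?_)⟩
    rw [div_le_div_iff₀ (by positivity) (by positivity)]
    nlinarith
  · refine ⟨.inr z, hz, le_trans ?_ hgap⟩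
    rw [div_le_div_iff₀ (by positivity) (by positivity)]
    nlinarith

/-- An action witness still in `π t'` keeps `v T - v t'` large at its source; a cycle witness has
the same value under `π t` and `π t'`. -/
theorem residual_le_of_isProgressWitness (h : M.NoNewCycleRun γ π v a T)
    (hγ : ∀ a, 0 ≤ γ a ∧ γ a < 1) {t t' : ℕ} (htt' : t ≤ t') (ht' : t' < T)
    {w : A ⊕ S} (hw : M.IsProgressWitness γ π v T t w)
    (hw' : M.IsProgressWitness γ π v T t' w) :
    residual v T t / (2 * (Fintype.card S : ℝ) ^ 2) ≤ residual v T t' := by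
  rcases w with b | z
  · obtain ⟨-, hgain⟩ := hw
    obtain ⟨hb, -⟩ := hw'
    have hval := h.isValue t' ht'.le (M.src b)
    rw [hb] at hval
    have hmono := h.value_le_of_le hγ ht'.le le_rfl (M.tgt b)
    have := h.final_sub_le_residual hγ ht'.le (M.src b)
    simp only [gain] at hgain
    nlinarith [(hγ b).1]
  · obtain ⟨-, hgap⟩ := hw
    obtain ⟨⟨k, hk, hz⟩, -⟩ := hw'
    have hfrozen : v t' z = v t z :=
      value_eq_of_eqOn_orbit hγ (h.isPolicy t') (h.isPolicy t) (h.isValue t' ht'.le)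
        (h.isValue t (htt'.trans ht'.le)) (mem_Icc.1 hk).1 hz
        (eq_on_orbit_of_isCycleOf (h.isPolicy t) (h.isPolicy t') hk hz
          (h.isCycleOf_of_le htt' ht'.le ⟨z, ⟨k, hk, hz⟩, rfl⟩))
    have hn : (0 : ℝ) < Fintype.card S := Nat.cast_pos.2 (Fintype.card_pos_iff.2 ⟨z⟩)
    have hfinal := h.final_sub_le hγ ht' z
    have hres := h.gain_le_residual hγ ht'
    rw [hfrozen] at hfinal
    rw [div_le_iff₀ (by positivity)]
    rw [div_le_iff₀ (by positivity)] at hgap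
    nlinarith

theorem sub_le_floor_of_residual_le (h : M.NoNewCycleRun γ π v a T)
    (hγ : ∀ a, 0 ≤ γ a ∧ γ a < 1) (hn : 2 ≤ Fintype.card S) {t t' : ℕ}
    (htt' : t ≤ t') (ht' : t' < T)
    (hres : residual v T t / (2 * (Fintype.card S : ℝ) ^ 2) ≤ residual v T t') :
    t' - t ≤ ⌊3 * (Fintype.card S : ℝ) ^ 2 * Real.log (Fintype.card S)⌋₊ := by
  apply Nat.le_floor
  apply le_mul_log_of_le_pow (by exact_mod_cast hn)
  have hpos := h.residual_pos hγ (htt'.trans_lt ht')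
  have := hres.trans (h.residual_le_pow_mul hγ htt' ht'.le)
  rw [div_le_iff₀' (by positivity)] at this
  rw [one_div, inv_le_iff_one_le_mul₀' (by positivity)]
  nlinarith

theorem length_le [Fintype A] (h : M.NoNewCycleRun γ π v a T)
    (hγ : ∀ a, 0 ≤ γ a ∧ γ a < 1) (hn : 2 ≤ Fintype.card S) :
    T ≤ (Fintype.card A + Fintype.card S) *
      (⌊3 * (Fintype.card S : ℝ) ^ 2 * Real.log (Fintype.card S)⌋₊ + 1) := by
  have : Nonempty S := Fintype.card_pos_iff.1 (by omega)
  choose! w hw using fun t (ht : t < T) => h.exists_isProgressWitness hγ ht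
  calc T = (range T).card := (card_range T).symm
    _ ≤ (⌊3 * (Fintype.card S : ℝ) ^ 2 * Real.log (Fintype.card S)⌋₊ + 1) *
          ((range T).image w).card := by
        refine card_le_mul_card_image _ _ fun x _ => Finset.card_le_succ_of_forall_le_add ?_
        simp only [mem_filter, mem_range]
        rintro t ⟨ht, rfl⟩ t' ⟨ht', hw'⟩ htt'
        have := h.sub_le_floor_of_residual_le hγ hn htt' ht'
          (h.residual_le_of_isProgressWitness hγ htt' ht' (hw t ht) (hw' ▸ hw t' ht'))
        omega
    _ ≤ _ := by
        rw [mul_comm, ← Fintype.card_sum]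
        gcongr
        exact card_le_univ _

end NoNewCycleRun

section Execution

variable [Fintype S] [DecidableEq S] [DecidableEq A] {seq : ℕ → S → A}

theorem IsExecution.exists_noNewCycleRun (hseq : M.IsExecution γ seq) (t₀ N : ℕ)
    (h : ∀ t ≤ N, ¬ M.IsTerminal γ (seq (t₀ + t)) ∧ ¬ M.NewCycleAt seq (t₀ + t)) :
    ∃ v a, M.NoNewCycleRun γ (fun t => seq (t₀ + t)) v a N := by
  have hpivot : ∀ t ≤ N, M.SimplexPivot γ (seq (t₀ + t)) (seq (t₀ + t + 1)) := fun t ht =>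
    (hseq.2 (t₀ + t)).resolve_right fun h' => (h t ht).1 h'.1
  have : Nonempty A := by
    obtain ⟨-, a, -⟩ := hpivot 0 (Nat.zero_le N)
    exact ⟨a⟩
  choose! v a hv hpos hmax hupd using hpivot
  refine ⟨v, a, fun t => hseq.1 _, hv, fun t ht => hpos t ht.le, fun t ht => hmax t ht.le,
    fun t ht => hupd t ht.le, fun t ht C hC => ?_⟩
  by_contra hC'
  exact (h t ht.le).2 ⟨C, hC, hC'⟩

end Execution

end DetMDP

/-- There is an absolute constant `c` such that in any execution
of the simplex method with the highest-gain pivoting rule on a deterministic MDP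
with nonuniform discounts and `n ≥ 2` states, starting from any policy of the
execution, within `c·n²m·log n` iterations either the execution terminates or
some iteration creates a new cycle. -/
theorem new_cycle_or_terminate_nonuniform :
    ∃ c : ℝ, 0 < c ∧
      ∀ (S A : Type) [Fintype S] [Fintype A] [DecidableEq S] [DecidableEq A]
        (M : DetMDP S A) (γ : A → ℝ), (∀ a : A, 0 ≤ γ a ∧ γ a < 1) →
        2 ≤ Fintype.card S →
        ∀ seq : ℕ → S → A, M.IsExecution γ seq →
        ∀ t0 : ℕ, ∃ t : ℕ, t0 ≤ t ∧
          (t : ℝ) ≤ (t0 : ℝ) + c * (Fintype.card S : ℝ) ^ 2 * (Fintype.card A : ℝ) *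
            Real.log (Fintype.card S : ℝ) ∧
          (M.IsTerminal γ (seq t) ∨ M.NewCycleAt seq t) := by
  refine ⟨9, by norm_num, fun S A _ _ _ _ M γ hγ hn seq hseq t0 => ?_⟩
  by_contra! hfail
  set X := 9 * (Fintype.card S : ℝ) ^ 2 * Fintype.card A * Real.log (Fintype.card S)
  set N := ⌊X⌋₊
  have hN : (N : ℝ) ≤ X := Nat.floor_le (by positivity)
  obtain ⟨v, a, hrun⟩ := hseq.exists_noNewCycleRun t0 N fun t ht =>
    hfail (t0 + t) (by omega) (by push_cast; linarith [(Nat.cast_le (α := ℝ)).2 ht])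
  have hcard : Fintype.card S ≤ Fintype.card A :=
    Fintype.card_le_of_surjective M.src M.exists_action
  exact (hrun.length_le hγ hn).not_gt (add_mul_floor_succ_lt_floor hn hcard)
end
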